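/- Let λ be a strict partition with 1 ≤ l(λ) ≤ n. Then the polynomials P*_{λ|n} and P_{λ|n} exist (i.e., the respective antisymmetrized sums are divisible by (n−l(λ))!·V in ℚ[x_1,...,x_n]), and the difference P*_{λ|n} − P_{λ|n} is a supersymmetric polynomial of total degree strictly less than |λ|. -/

import Mathlib

open MvPolynomial Finset

/-- The Vandermonde polynomial `V = ∏_{1 ≤ i < j ≤ n} (x_i - x_j)`. -/
noncomputable def vand (n : ℕ) : MvPolynomial (Fin n) ℚ :=
  ∏ p ∈ Finset.univ.filter (fun p : Fin n × Fin n => p.1 < p.2), (X p.1 - X p.2)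

/-- `∏_{1 ≤ i ≤ l, i < j ≤ n} (x_i + x_j)`. -/
noncomputable def prodPlus (n l : ℕ) : MvPolynomial (Fin n) ℚ :=
  ∏ p ∈ Finset.univ.filter (fun p : Fin n × Fin n => (p.1 : ℕ) < l ∧ p.1 < p.2),
    (X p.1 + X p.2)

/-- `∏_{l < i < j ≤ n} (x_i - x_j)`. -/
noncomputable def prodMinus (n l : ℕ) : MvPolynomial (Fin n) ℚ :=
  ∏ p ∈ Finset.univ.filter (fun p : Fin n × Fin n => l ≤ (p.1 : ℕ) ∧ p.1 < p.2),
    (X p.1 - X p.2)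

/-- The signed symmetrization `∑_{ω ∈ S(n)} sgn(ω) · f(x_{ω(1)}, …, x_{ω(n)})`. -/
noncomputable def antiSum (n : ℕ) (f : MvPolynomial (Fin n) ℚ) : MvPolynomial (Fin n) ℚ :=
  ∑ ω : Equiv.Perm (Fin n), ((Equiv.Perm.sign ω : ℤ) : ℚ) • rename (⇑ω) f

/-- `∏_{i=1}^{l} (x_i ↓ λ_i)`, the product of falling factorial powers; here `lam i = 0`
for `i ≥ l`, so those factors are `1`. -/
noncomputable def fallProd (n : ℕ) (lam : Fin n → ℕ) : MvPolynomial (Fin n) ℚ :=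
  ∏ i : Fin n, ∏ k ∈ Finset.range (lam i), (X i - C (k : ℚ))

/-- `∏_{i=1}^{l} x_i^{λ_i}`; here `lam i = 0` for `i ≥ l`, so those factors are `1`. -/
noncomputable def powProd (n : ℕ) (lam : Fin n → ℕ) : MvPolynomial (Fin n) ℚ :=
  ∏ i : Fin n, X i ^ lam i

/-- A polynomial `f(x_1, …, x_n)` is supersymmetric if it is symmetric and, for all
`1 ≤ i < j ≤ n`, the result of substituting `x_i = t`, `x_j = -t` does not depend on `t`. -/
def IsSupersymmetric {n : ℕ} (f : MvPolynomial (Fin n) ℚ) : Prop :=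
  (∀ ω : Equiv.Perm (Fin n), rename (⇑ω) f = f) ∧
  (∀ i j : Fin n, i < j → ∀ s t : ℚ,
    aeval (fun k : Fin n => if k = i then C s else if k = j then C (-s) else X k) f =
    aeval (fun k : Fin n => if k = i then C t else if k = j then C (-t) else X k) f)

/-!
Both alternating sums are antisymmetric, hence divisible by `V`, whose linear factors
`x_a - x_b` are pairwise non-associated irreducibles; cancelling `V` shows that the quotients are
symmetric.

For the cancellation property substitute `-x_i` for `x_j` (`substNeg i j`). In the alternating
sum of `g · ∏_{a<b} (x_a ± x_b)`, where `g` only involves `x_1, …, x_l`, the term indexed by `ω`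
contains the factor `x_i + x_j`, hence vanishes, as soon as `ω⁻¹ i` or `ω⁻¹ j` is among the
first `l` indices. Otherwise the substitution leaves `ω g` alone, and every factor
`x_{ω a} ± x_{ω b}` has at most the `x_i`-degree of the matching factor `x_{ω a} - x_{ω b}` of
`±ω V`. So the substituted sum has `x_i`-degree at most that of the substituted `V ≠ 0`, and the
substituted quotient does not involve `x_i`.

The degree bound holds because `V` and `∏_{a<b} (x_a ± x_b)` are homogeneous of the same degree,
while `∏ (x_i ↓ λ_i) - ∏ x_i ^ λ_i` has degree `< |λ|`.
-/

namespace MvPolynomial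

variable {σ R : Type*} [CommRing R]

theorem X_sub_dvd_sub_aeval_update [DecidableEq σ] (b : σ) (h g : MvPolynomial σ R) :
    X b - h ∣ g - aeval (Function.update X b h) g := by
  induction g using MvPolynomial.induction_on with
  | C a => simp
  | add p q hp hq => rw [map_add, add_sub_add_comm]; exact dvd_add hp hq
  | mul_X p k hp =>
    set φ := Function.update X b h
    rw [map_mul, aeval_X,
      show p * X k - aeval φ p * φ k = (p - aeval φ p) * X k + aeval φ p * (X k - φ k) by ring]
    refine dvd_add (dvd_mul_of_dvd_left hp _) (dvd_mul_of_dvd_right ?_ _)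
    rcases eq_or_ne k b with rfl | hk
    · simp [φ]
    · simp [φ, hk]

theorem aeval_update_eq_self_of_notMem_vars [DecidableEq σ] {k : σ} {p : MvPolynomial σ R}
    (hk : k ∉ p.vars) (c : MvPolynomial σ R) : aeval (Function.update X k c) p = p := by
  conv_rhs => rw [← aeval_X_left_apply p]
  exact eval₂Hom_congr' rfl
    (fun k' hk' _ => Function.update_of_ne (by rintro rfl; exact hk hk') _ _) rfl

theorem totalDegree_prod_sub_prod_lt {ι : Type*} {s : Finset ι} (hs : s.Nonempty)
    {f g : ι → MvPolynomial σ R} {d : ι → ℕ} (hf : ∀ k ∈ s, (f k).totalDegree ≤ d k)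
    (hg : ∀ k ∈ s, (g k).totalDegree ≤ d k) (hfg : ∀ k ∈ s, (f k - g k).totalDegree < d k) :
    (∏ k ∈ s, f k - ∏ k ∈ s, g k).totalDegree < ∑ k ∈ s, d k := by
  induction hs using Finset.Nonempty.cons_induction with
  | singleton a => simpa using hfg a (mem_singleton_self a)
  | cons a s ha hs ih =>
    simp only [mem_cons, forall_eq_or_imp] at hf hg hfg
    have hprod : (∏ k ∈ s, g k).totalDegree ≤ ∑ k ∈ s, d k :=
      (totalDegree_finsetProd _ _).trans (sum_le_sum hg.2)
    have hrest := ih hf.2 hg.2 hfg.2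
    rw [prod_cons, prod_cons, sum_cons, show f a * ∏ k ∈ s, f k - g a * ∏ k ∈ s, g k
      = f a * (∏ k ∈ s, f k - ∏ k ∈ s, g k) + (f a - g a) * ∏ k ∈ s, g k by ring]
    refine (totalDegree_add _ _).trans_lt (max_lt ?_ ?_)
    · exact (totalDegree_mul _ _).trans_lt (by omega)
    · exact (totalDegree_mul _ _).trans_lt (by omega)

theorem degreeOf_eq_zero_of_degreeOf_mul_le [IsDomain R] {i : σ} {w q : MvPolynomial σ R}
    (hw : w ≠ 0) (h : degreeOf i (w * q) ≤ degreeOf i w) : degreeOf i q = 0 := by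
  rcases eq_or_ne q 0 with rfl | hq
  · exact degreeOf_zero i
  · rw [degreeOf_mul_eq hw hq] at h
    omega

variable {K : Type*} [Field K]

theorem irreducible_X_sub_X {a b : σ} (hab : a ≠ b) :
    Irreducible (X a - X b : MvPolynomial σ K) := by
  classical
  refine irreducible_of_totalDegree_eq_one
    (((isHomogeneous_X K a).sub (isHomogeneous_X K b)).totalDegree
      (sub_ne_zero.2 ((X_injective (R := K)).ne hab))) fun x hx => isUnit_of_dvd_one ?_
  simpa [coeff_X, Finsupp.single_left_inj one_ne_zero, hab.symm] using hx (Finsupp.single a 1)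

theorem X_sub_X_not_dvd [LinearOrder σ] {p q : σ × σ} (hp : p.1 < p.2) (hq : q.1 < q.2)
    (hpq : p ≠ q) : ¬ (X p.1 - X p.2 : MvPolynomial σ K) ∣ X q.1 - X q.2 := by
  classical
  intro hd
  have := map_dvd (rename (Function.update id p.2 p.1)) hd
  simp only [map_sub, rename_X, Function.update_self, Function.update_of_ne hp.ne, id, sub_self,
    zero_dvd_iff, sub_eq_zero, X_inj] at this
  simp only [Function.update_apply, id] at this
  obtain ⟨p1, p2⟩ := p
  obtain ⟨q1, q2⟩ := q
  simp only [Prod.mk.injEq, ne_eq] at hp hq hpq this ⊢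
  split_ifs at this <;> subst_vars <;> simp_all [lt_asymm]

theorem X_sub_X_dvd_of_rename_swap [DecidableEq σ] [CharZero K] {a b : σ} (hab : a ≠ b)
    {g : MvPolynomial σ K} (hg : rename (Equiv.swap a b) g = -g) : X a - X b ∣ g := by
  set φ : σ → MvPolynomial σ K := Function.update X b (X a)
  have hφ : φ ∘ Equiv.swap a b = φ := by
    funext k
    rcases eq_or_ne k a with rfl | hka
    · simp [φ, hab]
    rcases eq_or_ne k b with rfl | hkb
    · simp [φ, hab]
    · simp [φ, Equiv.swap_apply_of_ne_of_ne hka hkb]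
  have h0 : aeval φ g = 0 := by
    have := congrArg (aeval φ) hg
    rw [aeval_rename, hφ, map_neg] at this
    exact self_eq_neg.mp this
  have := X_sub_dvd_sub_aeval_update b (X a) g
  rwa [h0, sub_zero, ← neg_sub, neg_dvd] at this

end MvPolynomial

section Alternant

variable {n : ℕ}

theorem vand_eq_neg_one_pow_mul_det (n : ℕ) :
    vand n = (-1) ^ #{p : Fin n × Fin n | p.1 < p.2} *
      (Matrix.vandermonde (X : Fin n → MvPolynomial (Fin n) ℚ)).det := by
  have hpairs : ∀ F : Fin n × Fin n → MvPolynomial (Fin n) ℚ,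
      ∏ p with p.1 < p.2, F p = ∏ i, ∏ j ∈ Ioi i, F (i, j) := by
    intro F
    rw [prod_filter, Fintype.prod_prod_type]
    refine prod_congr rfl fun i _ => ?_
    rw [← prod_filter]
    congr 1
    ext j
    simp
  rw [Matrix.det_vandermonde, ← hpairs fun p => X p.2 - X p.1, ← prod_const, ← prod_mul_distrib,
    vand]
  exact prod_congr rfl fun p _ => by ring

theorem rename_vand (ω : Equiv.Perm (Fin n)) :
    rename ω (vand n) = ((Equiv.Perm.sign ω : ℤ) : ℚ) • vand n := by
  have hdet : rename ω (Matrix.vandermonde (X : Fin n → MvPolynomial (Fin n) ℚ)).det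
      = Equiv.Perm.sign ω * (Matrix.vandermonde (X : Fin n → MvPolynomial (Fin n) ℚ)).det := by
    rw [← AlgHom.coe_toRingHom, RingHom.map_det, ← Matrix.det_permute]
    congr 1
    ext a b
    simp [Matrix.vandermonde_apply]
  rw [vand_eq_neg_one_pow_mul_det, map_mul, hdet, map_pow, map_neg, map_one,
    Int.cast_smul_eq_zsmul, zsmul_eq_mul]
  ring

theorem vand_ne_zero (n : ℕ) : vand n ≠ 0 :=
  prod_ne_zero_iff.2 fun _ hp => sub_ne_zero.2 (X_injective.ne (mem_filter.1 hp).2.ne)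

theorem isHomogeneous_vand (n : ℕ) :
    (vand n).IsHomogeneous #{p : Fin n × Fin n | p.1 < p.2} := by
  unfold vand
  simpa using IsHomogeneous.prod _ _ (fun _ => 1)
    fun p _ => (isHomogeneous_X ℚ p.1).sub (isHomogeneous_X ℚ p.2)

theorem vand_dvd_of_rename_swap {g : MvPolynomial (Fin n) ℚ}
    (hg : ∀ a b : Fin n, a ≠ b → rename (Equiv.swap a b) g = -g) : vand n ∣ g :=
  Finset.prod_dvd_of_isRelPrime
    (fun _ hp _ hq hpq => (irreducible_X_sub_X (mem_filter.1 hp).2.ne).isRelPrime_iff_not_dvd.2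
      (X_sub_X_not_dvd (mem_filter.1 hp).2 (mem_filter.1 hq).2 hpq))
    fun _ hp => X_sub_X_dvd_of_rename_swap (mem_filter.1 hp).2.ne
      (hg _ _ (mem_filter.1 hp).2.ne)

theorem rename_antiSum (τ : Equiv.Perm (Fin n)) (f : MvPolynomial (Fin n) ℚ) :
    rename τ (antiSum n f) = ((Equiv.Perm.sign τ : ℤ) : ℚ) • antiSum n f := by
  simp only [antiSum, map_sum, map_smul, rename_rename, smul_sum, smul_smul]
  refine Fintype.sum_equiv (Equiv.mulLeft τ) _ _ fun ω => ?_
  have hτ : ((Equiv.Perm.sign τ : ℤ) : ℚ) * ((Equiv.Perm.sign τ : ℤ) : ℚ) = 1 := by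
    rw [← Int.cast_mul, ← Units.val_mul, Int.units_mul_self]; rfl
  simp only [Equiv.coe_mulLeft, Equiv.Perm.sign_mul, Units.val_mul, Int.cast_mul, ← mul_assoc, hτ,
    one_mul]
  rfl

theorem antiSum_sub (f g : MvPolynomial (Fin n) ℚ) :
    antiSum n (f - g) = antiSum n f - antiSum n g := by
  simp only [antiSum, map_sub, smul_sub, sum_sub_distrib]

theorem totalDegree_antiSum_le (f : MvPolynomial (Fin n) ℚ) :
    (antiSum n f).totalDegree ≤ f.totalDegree :=
  (totalDegree_finsetSum _ _).trans
    (Finset.sup_le fun _ _ => (totalDegree_smul_le _ _).trans (totalDegree_rename_le _ _))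

theorem vand_dvd_antiSum (f : MvPolynomial (Fin n) ℚ) : vand n ∣ antiSum n f :=
  vand_dvd_of_rename_swap fun a b hab => by
    rw [rename_antiSum, Equiv.Perm.sign_swap hab]
    simp

theorem isSymmetric_of_vand_mul_eq_antiSum {q f : MvPolynomial (Fin n) ℚ}
    (h : vand n * q = antiSum n f) : q.IsSymmetric := by
  intro ω
  have hs : ((Equiv.Perm.sign ω : ℤ) : ℚ) ≠ 0 := by simp
  apply mul_left_cancel₀ (smul_ne_zero hs (vand_ne_zero n))
  rw [← rename_vand, ← map_mul, h, rename_antiSum, ← h, rename_vand, smul_mul_assoc]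

end Alternant

section FallingFactorial

variable {n : ℕ}

theorem fallProd_mem_supported (lam : Fin n → ℕ) : fallProd n lam ∈ supported ℚ {i | lam i ≠ 0} :=
  Subalgebra.prod_mem _ fun i _ => by
    rcases eq_or_ne (lam i) 0 with h | h
    · simp [h]
    · exact Subalgebra.prod_mem _ fun k _ =>
        Subalgebra.sub_mem _ (X_mem_supported.2 h) (Subalgebra.algebraMap_mem _ (k : ℚ))

theorem powProd_mem_supported (lam : Fin n → ℕ) : powProd n lam ∈ supported ℚ {i | lam i ≠ 0} :=
  Subalgebra.prod_mem _ fun i _ => by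
    rcases eq_or_ne (lam i) 0 with h | h
    · simp [h]
    · exact Subalgebra.pow_mem _ (X_mem_supported.2 h) _

theorem totalDegree_fallProd_sub_powProd_lt {lam : Fin n → ℕ} (h : ∃ i, lam i ≠ 0) :
    (fallProd n lam - powProd n lam).totalDegree < ∑ i, lam i := by
  obtain ⟨i, hi⟩ := h
  have hfall : fallProd n lam = ∏ x ∈ univ.sigma fun i => range (lam i), (X x.1 - C (x.2 : ℚ)) := by
    simp [fallProd, prod_sigma]
  have hpow : powProd n lam = ∏ x ∈ univ.sigma fun i => range (lam i), X x.1 := by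
    simp [powProd, prod_sigma]
  have hsum : ∑ i, lam i = #(univ.sigma fun i => range (lam i)) := by simp [card_sigma]
  rw [hfall, hpow, hsum, card_eq_sum_ones]
  refine totalDegree_prod_sub_prod_lt ⟨⟨i, 0⟩, by simpa [Nat.pos_iff_ne_zero]⟩
    (fun _ _ => (totalDegree_sub _ _).trans (by rw [totalDegree_X, totalDegree_C]; simp))
    (fun _ _ => (totalDegree_X _).le)
    (fun _ _ => by rw [sub_sub_cancel_left, totalDegree_neg, totalDegree_C]; exact one_pos)

end FallingFactorial

section SubstNeg

variable {σ K : Type*} [DecidableEq σ] [Field K] {i j : σ}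

noncomputable def substNeg (i j : σ) : MvPolynomial σ K →ₐ[K] MvPolynomial σ K :=
  aeval (Function.update X j (-X i))

theorem substNeg_X_self : substNeg i j (X j : MvPolynomial σ K) = -X i := by
  simp [substNeg]

theorem substNeg_X {k : σ} (hk : k ≠ j) : substNeg i j (X k : MvPolynomial σ K) = X k := by
  simp [substNeg, hk]

theorem degreeOf_substNeg_X_le_one (k : σ) :
    degreeOf i (substNeg i j (X k : MvPolynomial σ K)) ≤ 1 := by
  rcases eq_or_ne k j with rfl | hk
  · rw [substNeg_X_self, degreeOf_neg, degreeOf_X]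
    split <;> omega
  · rw [substNeg_X hk, degreeOf_X]
    split <;> omega

theorem aeval_ite_eq_aeval_update_substNeg (hij : i ≠ j) (s : K) (p : MvPolynomial σ K) :
    aeval (fun k => if k = i then C s else if k = j then C (-s) else X k) p =
      aeval (Function.update X i (C s)) (substNeg i j p) := by
  rw [substNeg, ← AlgHom.comp_apply, comp_aeval]
  congr 2 with k
  rcases eq_or_ne k j with rfl | hkj
  · simp [hij.symm]
  · rcases eq_or_ne k i with rfl | hki <;> simp [*]

variable [CharZero K]

theorem coeff_substNeg_X_sub_X_ne_zero (hij : i ≠ j) {u v : σ} (huv : u ≠ v)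
    (h : u = i ∨ u = j ∨ v = i ∨ v = j) :
    coeff (Finsupp.single i 1) (substNeg i j (X u - X v : MvPolynomial σ K)) ≠ 0 := by
  have hc : ∀ k, coeff (Finsupp.single i 1) (substNeg i j (X k : MvPolynomial σ K)) =
      if k = j then -1 else if k = i then 1 else 0 := by
    intro k
    rcases eq_or_ne k j with rfl | hk
    · simp [substNeg_X_self, coeff_X]
    · simp [substNeg_X hk, coeff_X, hk, Finsupp.single_left_inj one_ne_zero, eq_comm]
  rw [map_sub, coeff_sub, hc, hc]
  rcases h with rfl | rfl | rfl | rfl <;> split_ifs <;> simp_all <;> norm_num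

theorem substNeg_X_sub_X_ne_zero (hij : i ≠ j) {u v : σ} (huv : u ≠ v) :
    substNeg i j (X u - X v : MvPolynomial σ K) ≠ 0 := by
  by_cases h : u = i ∨ u = j ∨ v = i ∨ v = j
  · exact fun h0 => coeff_substNeg_X_sub_X_ne_zero hij huv h (by rw [h0, coeff_zero])
  · simp only [not_or] at h
    rw [map_sub, substNeg_X h.2.1, substNeg_X h.2.2.2]
    exact sub_ne_zero.2 (X_injective.ne huv)

theorem degreeOf_substNeg_X_add_C_mul_X_le (hij : i ≠ j) {u v : σ} (huv : u ≠ v) (c : K) :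
    degreeOf i (substNeg i j (X u + C c * X v : MvPolynomial σ K)) ≤
      degreeOf i (substNeg i j (X u - X v : MvPolynomial σ K)) := by
  rw [map_add, map_mul, algHom_C]
  by_cases h : u = i ∨ u = j ∨ v = i ∨ v = j
  · calc _ ≤ 1 := (degreeOf_add_le _ _ _).trans (max_le (degreeOf_substNeg_X_le_one u)
          ((degreeOf_C_mul_le _ _ _).trans (degreeOf_substNeg_X_le_one v)))
      _ ≤ _ := by
        simpa using monomial_le_degreeOf i
          (mem_support_iff.2 (coeff_substNeg_X_sub_X_ne_zero hij huv h))
  · simp only [not_or] at h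
    rw [substNeg_X h.2.1, substNeg_X h.2.2.2]
    refine le_trans ?_ (Nat.zero_le _)
    exact (degreeOf_add_le _ _ _).trans (max_le (degreeOf_X_of_ne (Ne.symm h.1)).le
      ((degreeOf_C_mul_le _ _ _).trans (degreeOf_X_of_ne (Ne.symm h.2.2.1)).le))

end SubstNeg

section Supersymmetry

variable {n l : ℕ}

theorem prodPlus_mul_prodMinus (n l : ℕ) : prodPlus n l * prodMinus n l =
    ∏ p : Fin n × Fin n with p.1 < p.2, (X p.1 + C (if (p.1 : ℕ) < l then 1 else -1) * X p.2) := by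
  rw [← prod_filter_mul_prod_filter_not _ (fun p : Fin n × Fin n => (p.1 : ℕ) < l),
    filter_filter, filter_filter]
  congr 1
  · refine prod_congr (by ext; simp [and_comm]) fun p hp => ?_
    simp [(mem_filter.1 hp).2.2]
  · refine prod_congr (by ext; simp [and_comm]) fun p hp => ?_
    simp [(mem_filter.1 hp).2.2, sub_eq_add_neg]

theorem isHomogeneous_prodPlus_mul_prodMinus (n l : ℕ) :
    (prodPlus n l * prodMinus n l).IsHomogeneous #{p : Fin n × Fin n | p.1 < p.2} := by
  rw [prodPlus_mul_prodMinus]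
  simpa using IsHomogeneous.prod _ _ (fun _ => 1)
    fun p _ => (isHomogeneous_X ℚ p.1).add (isHomogeneous_C_mul_X _ p.2)

theorem totalDegree_le_of_vand_mul_eq_antiSum {q g : MvPolynomial (Fin n) ℚ}
    (h : vand n * q = antiSum n (g * prodPlus n l * prodMinus n l)) :
    q.totalDegree ≤ g.totalDegree := by
  rcases eq_or_ne q 0 with rfl | hq
  · simp
  have hV := (isHomogeneous_vand n).totalDegree (vand_ne_zero n)
  have hB := (isHomogeneous_prodPlus_mul_prodMinus n l).totalDegree_le
  have := calc (vand n).totalDegree + q.totalDegree = (vand n * q).totalDegree :=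
        (totalDegree_mul_of_isDomain (vand_ne_zero n) hq).symm
    _ ≤ (g * (prodPlus n l * prodMinus n l)).totalDegree := by
        rw [h, ← mul_assoc]
        exact totalDegree_antiSum_le _
    _ ≤ g.totalDegree + (prodPlus n l * prodMinus n l).totalDegree := totalDegree_mul _ _
  omega

variable {i j : Fin n}

theorem X_add_X_dvd_prodPlus {a b : Fin n} (hab : a ≠ b) (h : (a : ℕ) < l ∨ (b : ℕ) < l) :
    X a + X b ∣ prodPlus n l := by
  wlog hlt : a < b generalizing a b
  · rw [add_comm]
    exact this hab.symm h.symm (hab.lt_or_gt.resolve_left hlt)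
  have hmem : (a, b) ∈ univ.filter fun p : Fin n × Fin n => (p.1 : ℕ) < l ∧ p.1 < p.2 :=
    mem_filter.2 ⟨mem_univ _, h.elim id (Fin.lt_def.1 hlt).trans, hlt⟩
  exact (dvd_prod_of_mem (fun p : Fin n × Fin n => (X p.1 + X p.2 : MvPolynomial (Fin n) ℚ)) hmem :)

theorem substNeg_rename_prodPlus_eq_zero (hij : i ≠ j) {ω : Equiv.Perm (Fin n)}
    (h : (ω.symm i : ℕ) < l ∨ (ω.symm j : ℕ) < l) :
    substNeg i j (rename ω (prodPlus n l)) = 0 := by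
  have := map_dvd (substNeg i j) (map_dvd (rename ω) (X_add_X_dvd_prodPlus (l := l)
    (ω.symm.injective.ne hij) h))
  rwa [map_add, map_add, rename_X, rename_X, Equiv.apply_symm_apply, Equiv.apply_symm_apply,
    substNeg_X hij, substNeg_X_self, add_neg_cancel, zero_dvd_iff] at this

theorem degreeOf_substNeg_rename_le {g : MvPolynomial (Fin n) ℚ}
    (hg : g ∈ supported ℚ {k : Fin n | (k : ℕ) < l}) (hij : i ≠ j) (ω : Equiv.Perm (Fin n)) :
    degreeOf i (substNeg i j (rename ω (g * prodPlus n l * prodMinus n l))) ≤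
      degreeOf i (substNeg i j (vand n)) := by
  by_cases hl : (ω.symm i : ℕ) < l ∨ (ω.symm j : ℕ) < l
  · simp [substNeg_rename_prodPlus_eq_zero hij hl]
  simp only [not_or, not_lt] at hl
  have hout : ∀ k, l ≤ (ω.symm k : ℕ) → k ∉ (rename ω g).vars := by
    intro k hk hmem
    obtain ⟨k', hk', rfl⟩ := mem_image.1 (vars_rename _ _ hmem)
    have := mem_supported.1 hg hk'
    simp only [Equiv.symm_apply_apply, Set.mem_ofPred_eq] at hk this
    omega
  have hg0 : degreeOf i (substNeg i j (rename ω g)) = 0 := by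
    rw [substNeg, aeval_update_eq_self_of_notMem_vars (hout j hl.2)]
    by_contra h
    exact hout i hl.1 (mem_vars_iff_degreeOf_ne_zero.2 h)
  calc degreeOf i (substNeg i j (rename ω (g * prodPlus n l * prodMinus n l)))
      = degreeOf i (substNeg i j (rename ω g) * ∏ p : Fin n × Fin n with p.1 < p.2,
          substNeg i j (X (ω p.1) + C (if (p.1 : ℕ) < l then 1 else -1) * X (ω p.2))) := by
        simp [mul_assoc, prodPlus_mul_prodMinus, map_prod]
    _ ≤ 0 + ∑ p : Fin n × Fin n with p.1 < p.2,
          degreeOf i (substNeg i j (X (ω p.1) - X (ω p.2))) :=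
        (degreeOf_mul_le _ _ _).trans (add_le_add hg0.le ((degreeOf_prod_le _ _ _).trans
          (sum_le_sum fun p hp => degreeOf_substNeg_X_add_C_mul_X_le hij
            (ω.injective.ne (mem_filter.1 hp).2.ne) _)))
    _ = degreeOf i (substNeg i j (rename ω (vand n))) := by
        rw [zero_add, vand, map_prod, map_prod, degreeOf_prod_eq _ _ fun p hp => ?_]
        · simp
        · simpa using substNeg_X_sub_X_ne_zero hij (ω.injective.ne (mem_filter.1 hp).2.ne)
    _ = degreeOf i (substNeg i j (vand n)) := by
        rw [rename_vand, map_smul, smul_eq_C_mul,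
          degreeOf_C_mul _ _ (mem_nonZeroDivisors_of_ne_zero (by simp))]

theorem notMem_vars_substNeg_of_vand_mul_eq_antiSum {q g : MvPolynomial (Fin n) ℚ}
    (hg : g ∈ supported ℚ {k : Fin n | (k : ℕ) < l})
    (h : vand n * q = antiSum n (g * prodPlus n l * prodMinus n l)) (hij : i ≠ j) :
    i ∉ (substNeg i j q).vars := by
  have hV : substNeg i j (vand n) ≠ 0 := by
    rw [vand, map_prod]
    exact prod_ne_zero_iff.2 fun p hp => substNeg_X_sub_X_ne_zero hij (mem_filter.1 hp).2.ne
  rw [mem_vars_iff_degreeOf_ne_zero, not_not]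
  refine degreeOf_eq_zero_of_degreeOf_mul_le hV ?_
  rw [← map_mul, h, antiSum, map_sum]
  refine (degreeOf_sum_le _ _ _).trans (Finset.sup_le fun ω _ => ?_)
  rw [map_smul, smul_eq_C_mul]
  exact (degreeOf_C_mul_le _ _ _).trans (degreeOf_substNeg_rename_le hg hij ω)

theorem isSupersymmetric_of_vand_mul_eq_antiSum {q g : MvPolynomial (Fin n) ℚ}
    (hg : g ∈ supported ℚ {k : Fin n | (k : ℕ) < l})
    (h : vand n * q = antiSum n (g * prodPlus n l * prodMinus n l)) : IsSupersymmetric q := by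
  refine ⟨isSymmetric_of_vand_mul_eq_antiSum h, fun i j hij s t => ?_⟩
  have hi := notMem_vars_substNeg_of_vand_mul_eq_antiSum hg h hij.ne
  rw [aeval_ite_eq_aeval_update_substNeg hij.ne, aeval_ite_eq_aeval_update_substNeg hij.ne,
    aeval_update_eq_self_of_notMem_vars hi, aeval_update_eq_self_of_notMem_vars hi]

theorem IsSupersymmetric.smul {f : MvPolynomial (Fin n) ℚ} (hf : IsSupersymmetric f) (c : ℚ) :
    IsSupersymmetric (c • f) :=
  ⟨fun ω => by rw [map_smul, hf.1 ω],
    fun i j hij s t => by rw [map_smul, map_smul, hf.2 i j hij s t]⟩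

end Supersymmetry

theorem exists_Pstar_P_and_diff_supersymmetric_general
    (n l : ℕ) (hl : 1 ≤ l) (hln : l ≤ n) (lam : Fin n → ℕ)
    (hpos : ∀ i : Fin n, 0 < lam i ↔ (i : ℕ) < l) :
    ∃ Pstar P : MvPolynomial (Fin n) ℚ,
      (Nat.factorial (n - l) : ℚ) • (vand n * Pstar) =
        antiSum n (fallProd n lam * prodPlus n l * prodMinus n l) ∧
      (Nat.factorial (n - l) : ℚ) • (vand n * P) =
        antiSum n (powProd n lam * prodPlus n l * prodMinus n l) ∧
      IsSupersymmetric (Pstar - P) ∧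
      (Pstar - P).totalDegree < ∑ i : Fin n, lam i := by
  obtain ⟨Qstar, hQstar⟩ := vand_dvd_antiSum (fallProd n lam * prodPlus n l * prodMinus n l)
  obtain ⟨Q, hQ⟩ := vand_dvd_antiSum (powProd n lam * prodPlus n l * prodMinus n l)
  have hdiff : vand n * (Qstar - Q) =
      antiSum n ((fallProd n lam - powProd n lam) * prodPlus n l * prodMinus n l) := by
    rw [mul_sub, ← hQstar, ← hQ, ← antiSum_sub, sub_mul, sub_mul]
  have hsupp : fallProd n lam - powProd n lam ∈ supported ℚ {k : Fin n | (k : ℕ) < l} :=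
    supported_mono (fun k hk => (hpos k).1 (Nat.pos_of_ne_zero hk))
      (Subalgebra.sub_mem _ (fallProd_mem_supported lam) (powProd_mem_supported lam))
  have hlam : ∃ i, lam i ≠ 0 := ⟨⟨0, by omega⟩, ((hpos _).2 (by simp only; omega)).ne'⟩
  have hK : (Nat.factorial (n - l) : ℚ) ≠ 0 := by positivity
  refine ⟨(Nat.factorial (n - l) : ℚ)⁻¹ • Qstar, (Nat.factorial (n - l) : ℚ)⁻¹ • Q,
    ?_, ?_, ?_, ?_⟩
  · rw [mul_smul_comm, smul_inv_smul₀ hK, hQstar]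
  · rw [mul_smul_comm, smul_inv_smul₀ hK, hQ]
  · rw [← smul_sub]
    exact (isSupersymmetric_of_vand_mul_eq_antiSum hsupp hdiff).smul _
  · rw [← smul_sub]
    exact (totalDegree_smul_le _ _).trans_lt ((totalDegree_le_of_vand_mul_eq_antiSum hdiff).trans_lt
      (totalDegree_fallProd_sub_powProd_lt hlam))

/-- the polynomials `P*_{λ|n}` and `P_{λ|n}` exist, i.e. the antisymmetrized
sums are divisible by `(n - l)! · V`, and `P*_{λ|n} - P_{λ|n}` is a supersymmetric
polynomial of total degree strictly less than `|λ|`. Here the strict partition `λ` with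
`1 ≤ l(λ) = l ≤ n` is encoded as `lam : Fin n → ℕ`, strictly decreasing and positive on
the first `l` coordinates and zero on the rest. -/
theorem exists_Pstar_P_and_diff_supersymmetric
    (n l : ℕ) (hl : 1 ≤ l) (hln : l ≤ n) (lam : Fin n → ℕ)
    (hpos : ∀ i : Fin n, 0 < lam i ↔ (i : ℕ) < l)
    (hdec : ∀ i j : Fin n, i < j → (j : ℕ) < l → lam j < lam i) :
    ∃ Pstar P : MvPolynomial (Fin n) ℚ,
      (Nat.factorial (n - l) : ℚ) • (vand n * Pstar) =
        antiSum n (fallProd n lam * prodPlus n l * prodMinus n l) ∧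
      (Nat.factorial (n - l) : ℚ) • (vand n * P) =
        antiSum n (powProd n lam * prodPlus n l * prodMinus n l) ∧
      IsSupersymmetric (Pstar - P) ∧
      (Pstar - P).totalDegree < ∑ i : Fin n, lam i :=
  exists_Pstar_P_and_diff_supersymmetric_general n l hl hln lam hpos
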